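/- Let θ*, θtrue, e be reals, σ > 0, τ > 0, z* ∈ [−1,1], with θ* − θtrue + ((−|θ*| + √(|θ*|² + 4σ²))/2) z* = e, |θ*| > τ, and |e| ≤ τ. Then |θtrue − θ*| ≤ τ + σ²/τ. -/

import Mathlib

/-! The shrinkage term `(-a + √(a² + 4σ²))/2` lies in `[0, σ²/a]` for `a > 0`, by the tangent-line
bound `√(a² + b) ≤ a + b/(2a)` of the concave square root. Since `|θ*| > τ`, it is below `σ²/τ`,
and `θtrue − θ* = s z* − e` with `|z*| ≤ 1`, `|e| ≤ τ`. -/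

lemma Real.sqrt_sq_add_le {a b : ℝ} (ha : 0 < a) (hb : 0 ≤ b) :
    √(a ^ 2 + b) ≤ a + b / (2 * a) := by
  rw [Real.sqrt_le_left (by positivity), add_sq]
  have : 2 * a * (b / (2 * a)) = b := by field_simp
  nlinarith [sq_nonneg (b / (2 * a))]

lemma shrinkage_nonneg (a σ : ℝ) : 0 ≤ (-a + √(a ^ 2 + 4 * σ ^ 2)) / 2 := by
  have : |a| ≤ √(a ^ 2 + 4 * σ ^ 2) := Real.abs_le_sqrt (le_add_of_nonneg_right (by positivity))
  linarith [le_abs_self a]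

lemma shrinkage_le {a : ℝ} (ha : 0 < a) (σ : ℝ) :
    (-a + √(a ^ 2 + 4 * σ ^ 2)) / 2 ≤ σ ^ 2 / a := by
  have := Real.sqrt_sq_add_le ha (by positivity : 0 ≤ 4 * σ ^ 2)
  have h : 4 * σ ^ 2 / (2 * a) = 2 * (σ ^ 2 / a) := by field_simp; ring
  linarith

theorem stmt15_general (θs θt e σ τ zs : ℝ) (hτ : 0 < τ)
    (hz : zs ∈ Set.Icc (-1 : ℝ) 1)
    (heq : θs - θt + ((-|θs| + Real.sqrt (|θs| ^ 2 + 4 * σ ^ 2)) / 2) * zs = e)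
    (hgt : |θs| > τ) (he : |e| ≤ τ) :
    |θt - θs| ≤ τ + σ ^ 2 / τ := by
  set s := (-|θs| + √(|θs| ^ 2 + 4 * σ ^ 2)) / 2
  have hs₀ : 0 ≤ s := shrinkage_nonneg _ σ
  have hs : s ≤ σ ^ 2 / τ :=
    (shrinkage_le (hτ.trans hgt) σ).trans (div_le_div_of_nonneg_left (by positivity) hτ hgt.le)
  have hsz : |s * zs| ≤ s := by
    rw [abs_mul, abs_of_nonneg hs₀]
    exact mul_le_of_le_one_right hs₀ (abs_le.2 hz)
  calc |θt - θs| = |s * zs - e| := by rw [← heq]; ring_nf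
    _ ≤ |s * zs| + |e| := abs_sub _ _
    _ ≤ τ + σ ^ 2 / τ := by linarith

/-- Per-coordinate error bound: if `θ* − θtrue + s·z* = e` with the shrinkage term
`s = (−|θ*| + √(|θ*|² + 4σ²))/2`, `|z*| ≤ 1`, `|θ*| > τ` and `|e| ≤ τ`, then
`|θtrue − θ*| ≤ τ + σ²/τ`. -/
theorem stmt15 (θs θt e σ τ zs : ℝ) (hσ : 0 < σ) (hτ : 0 < τ)
    (hz : zs ∈ Set.Icc (-1 : ℝ) 1)
    (heq : θs - θt + ((-|θs| + Real.sqrt (|θs| ^ 2 + 4 * σ ^ 2)) / 2) * zs = e)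
    (hgt : |θs| > τ) (he : |e| ≤ τ) :
    |θt - θs| ≤ τ + σ ^ 2 / τ :=
  stmt15_general θs θt e σ τ zs hτ hz heq hgt he
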